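/- arXiv:2603.19999 — 8 statements merged into one kernel-verified Lean document; each statement's English description precedes it below -/
import Mathlib

section
/- Let N be a positive integer, let a, b ∈ ℂ^N have unit-modulus entries, let c > 0 and α > 0. Then for every vector ψ ∈ ℂ^N with |ψ_n| ≤ α for all n, one has |∑_{n=1}^N ψ_n a_n b_n|² / (1 + c · ∑_{n=1}^N |ψ_n|²) ≤ α² N² / (1 + c α² N), and equality holds for ψ_n = α · conj(a_n b_n). -/
open Finset

/-!
Since `a n * b n` is unimodular, the triangle inequality and Cauchy–Schwarz bound the numerator
by `N ∑ ‖ψ n‖²`, so the ratio is at most `N · T / (1 + c T)` with `T = ∑ ‖ψ n‖² ≤ α² N`.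
As `T ↦ T / (1 + c T)` is increasing, the worst case is `T = α² N`, which the phase-aligned
configuration `ψ n = α · conj (a n * b n)` attains: it makes every summand equal to `α`.
-/

lemma div_one_add_mul_le_div_one_add_mul {c s t : ℝ} (hc : 0 ≤ c) (ht : 0 ≤ t) (hts : t ≤ s) :
    t / (1 + c * t) ≤ s / (1 + c * s) := by
  rw [div_le_div_iff₀ (by positivity) (by nlinarith)]
  nlinarith

section
variable {ι R : Type*} [Fintype ι] [SeminormedRing R]

theorem norm_sum_mul_mul_sq_le (ψ a b : ι → R)
    (ha : ∀ n, ‖a n‖ ≤ 1) (hb : ∀ n, ‖b n‖ ≤ 1) :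
    ‖∑ n, ψ n * a n * b n‖ ^ 2 ≤ Fintype.card ι * ∑ n, ‖ψ n‖ ^ 2 := by
  have h_summand (n : ι) : ‖ψ n * a n * b n‖ ≤ ‖ψ n‖ :=
    calc ‖ψ n * a n * b n‖ ≤ ‖ψ n‖ * ‖a n‖ * ‖b n‖ := norm_mul₃_le
      _ ≤ ‖ψ n‖ * 1 * 1 := by gcongr <;> simp [ha n, hb n]
      _ = ‖ψ n‖ := by ring
  calc ‖∑ n, ψ n * a n * b n‖ ^ 2 ≤ (∑ n, ‖ψ n‖) ^ 2 := by
        gcongr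
        exact (norm_sum_le _ _).trans (sum_le_sum fun n _ ↦ h_summand n)
    _ ≤ Fintype.card ι * ∑ n, ‖ψ n‖ ^ 2 := by
        simpa using sq_sum_le_card_mul_sum_sq (s := univ) (f := fun n ↦ ‖ψ n‖)

theorem norm_sum_mul_mul_sq_div_le (ψ a b : ι → R)
    (ha : ∀ n, ‖a n‖ ≤ 1) (hb : ∀ n, ‖b n‖ ≤ 1) {c α : ℝ} (hc : 0 ≤ c)
    (hψ : ∀ n, ‖ψ n‖ ≤ α) :
    ‖∑ n, ψ n * a n * b n‖ ^ 2 / (1 + c * ∑ n, ‖ψ n‖ ^ 2)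
      ≤ α ^ 2 * (Fintype.card ι : ℝ) ^ 2 / (1 + c * α ^ 2 * Fintype.card ι) := by
  set N : ℝ := (Fintype.card ι : ℝ)
  set T : ℝ := ∑ n, ‖ψ n‖ ^ 2
  have hT : 0 ≤ T := by positivity
  have hTα : T ≤ α ^ 2 * N :=
    calc T ≤ ∑ _n : ι, α ^ 2 := sum_le_sum fun n _ ↦ by gcongr; exact hψ n
      _ = α ^ 2 * N := by simp [N, mul_comm]
  calc ‖∑ n, ψ n * a n * b n‖ ^ 2 / (1 + c * T) ≤ N * T / (1 + c * T) := by
        gcongr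
        exact norm_sum_mul_mul_sq_le ψ a b ha hb
    _ = N * (T / (1 + c * T)) := mul_div_assoc _ _ _
    _ ≤ N * (α ^ 2 * N / (1 + c * (α ^ 2 * N))) :=
        mul_le_mul_of_nonneg_left (div_one_add_mul_le_div_one_add_mul hc hT hTα) (by positivity)
    _ = α ^ 2 * N ^ 2 / (1 + c * α ^ 2 * N) := by ring

end

lemma ofReal_mul_conj_mul_mul_eq {x y : ℂ} (hx : ‖x‖ = 1) (hy : ‖y‖ = 1) (α : ℝ) :
    (α : ℂ) * (starRingEnd ℂ) (x * y) * x * y = α := by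
  have h_unit : (starRingEnd ℂ) (x * y) * (x * y) = 1 := by
    rw [Complex.conj_mul', norm_mul, hx, hy]
    norm_num
  linear_combination (α : ℂ) * h_unit

theorem active_ris_config_opt_general (N : ℕ) (a b : Fin N → ℂ)
    (ha : ∀ n, ‖a n‖ = 1) (hb : ∀ n, ‖b n‖ = 1)
    (c α : ℝ) (hc : 0 < c) :
    (∀ ψ : Fin N → ℂ, (∀ n, ‖ψ n‖ ≤ α) →
      ‖∑ n, ψ n * a n * b n‖ ^ 2 / (1 + c * ∑ n, ‖ψ n‖ ^ 2)
        ≤ α ^ 2 * (N : ℝ) ^ 2 / (1 + c * α ^ 2 * (N : ℝ))) ∧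
    ‖∑ n, (α : ℂ) * (starRingEnd ℂ) (a n * b n) * a n * b n‖ ^ 2 /
        (1 + c * ∑ n, ‖(α : ℂ) * (starRingEnd ℂ) (a n * b n)‖ ^ 2)
      = α ^ 2 * (N : ℝ) ^ 2 / (1 + c * α ^ 2 * (N : ℝ)) := by
  refine ⟨fun ψ hψ ↦ ?_, ?_⟩
  · simpa using norm_sum_mul_mul_sq_div_le ψ a b (fun n ↦ (ha n).le) (fun n ↦ (hb n).le)
      hc.le hψ
  · have h_norm (n : Fin N) : ‖(α : ℂ) * (starRingEnd ℂ) (a n * b n)‖ ^ 2 = α ^ 2 := by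
      simp [ha n, hb n]
    simp only [ofReal_mul_conj_mul_mul_eq (ha _) (hb _), h_norm]
    simp only [sum_const, card_univ,
      Fintype.card_fin, nsmul_eq_mul, norm_mul, Complex.norm_natCast, Complex.norm_real,
      Real.norm_eq_abs, mul_pow, sq_abs]
    ring_nf

/-- Active-RIS configuration optimization without a direct link: for unit-modulus vectors
`a, b`, constants `c > 0` and per-element amplitude cap `α > 0`, any configuration `ψ` with
`|ψ n| ≤ α` satisfies
`|∑ ψ n * a n * b n|² / (1 + c ∑ |ψ n|²) ≤ α² N² / (1 + c α² N)`,
with equality for `ψ n = α * conj (a n * b n)`. -/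
theorem active_ris_config_opt (N : ℕ) (hN : 0 < N) (a b : Fin N → ℂ)
    (ha : ∀ n, ‖a n‖ = 1) (hb : ∀ n, ‖b n‖ = 1)
    (c α : ℝ) (hc : 0 < c) (hα : 0 < α) :
    (∀ ψ : Fin N → ℂ, (∀ n, ‖ψ n‖ ≤ α) →
      ‖∑ n, ψ n * a n * b n‖ ^ 2 / (1 + c * ∑ n, ‖ψ n‖ ^ 2)
        ≤ α ^ 2 * (N : ℝ) ^ 2 / (1 + c * α ^ 2 * (N : ℝ))) ∧
    ‖∑ n, (α : ℂ) * (starRingEnd ℂ) (a n * b n) * a n * b n‖ ^ 2 /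
        (1 + c * ∑ n, ‖(α : ℂ) * (starRingEnd ℂ) (a n * b n)‖ ^ 2)
      = α ^ 2 * (N : ℝ) ^ 2 / (1 + c * α ^ 2 * (N : ℝ)) :=
  active_ris_config_opt_general N a b ha hb c α hc
end

section
/- Let P, β₁, β₂, σ², M, N be positive reals with N² M β₂ < 1, and let α ≥ 0. Then α² P M β₁ β₂ / (σ² (1 + α² β₂ M)) ≥ P β₁ β₂ N² M / σ² if and only if α ≥ N / √(1 − N² M β₂). -/
/-!
Both SNRs share the positive factor `P β₁ β₂ M / σ²`; cancelling it leaves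
`N² ≤ α² / (1 + α² β₂ M)`, which is linear in `α²` once the denominator is cleared and
gives `N² / (1 - N² M β₂) ≤ α²`. Taking square roots (everything is nonnegative) yields the
threshold on `α`.
-/

theorem le_div_one_add_mul_iff {n a b : ℝ} (ha : 0 < 1 + a * b) (hn : 0 < 1 - n * b) :
    n ≤ a / (1 + a * b) ↔ n / (1 - n * b) ≤ a := by
  rw [le_div_iff₀ ha, div_le_iff₀ hn]
  constructor <;> intro h <;> linarith

theorem div_sqrt_le_iff_sq {x y d : ℝ} (hx : 0 ≤ x) (hy : 0 ≤ y) (hd : 0 < d) :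
    x / √d ≤ y ↔ x ^ 2 / d ≤ y ^ 2 := by
  rw [← Real.sqrt_sq hx, ← Real.sqrt_div' _ hd.le, Real.sqrt_le_iff,
    Real.sq_sqrt (sq_nonneg x)]
  exact and_iff_right hy

/-- NCR vs. passive RIS without a direct link: under `N² M β₂ < 1`, the NCR SNR exceeds the
passive-RIS SNR if and only if `α ≥ N / √(1 − N² M β₂)`. -/
theorem ncr_beats_passive_ris_iff (P β₁ β₂ σ2 M N : ℝ)
    (hP : 0 < P) (h1 : 0 < β₁) (h2 : 0 < β₂) (hσ : 0 < σ2) (hM : 0 < M) (hN : 0 < N)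
    (hcond : N ^ 2 * M * β₂ < 1) (α : ℝ) (hα : 0 ≤ α) :
    α ^ 2 * P * M * β₁ * β₂ / (σ2 * (1 + α ^ 2 * β₂ * M)) ≥ P * β₁ * β₂ * N ^ 2 * M / σ2
      ↔ α ≥ N / Real.sqrt (1 - N ^ 2 * M * β₂) := by
  have hc : 0 < P * β₁ * β₂ * M / σ2 := by positivity
  have hden : 0 < 1 + α ^ 2 * (β₂ * M) := by positivity
  have hgap : 0 < 1 - N ^ 2 * (β₂ * M) := by linarith
  have hncr : α ^ 2 * P * M * β₁ * β₂ / (σ2 * (1 + α ^ 2 * β₂ * M))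
      = P * β₁ * β₂ * M / σ2 * (α ^ 2 / (1 + α ^ 2 * (β₂ * M))) := by
    field_simp
  have hris : P * β₁ * β₂ * N ^ 2 * M / σ2 = P * β₁ * β₂ * M / σ2 * N ^ 2 := by ring
  rw [ge_iff_le, ge_iff_le, hncr, hris, mul_le_mul_iff_right₀ hc,
    le_div_one_add_mul_iff hden hgap, show N ^ 2 * M * β₂ = N ^ 2 * (β₂ * M) by ring,
    div_sqrt_le_iff_sq hN.le hα hgap]
end

section
/- Let P, β₁, β₂, σ², M, N be positive reals with N² M β₂ ≥ 1. Then for every α ≥ 0, α² P M β₁ β₂ / (σ² (1 + α² β₂ M)) < P β₁ β₂ N² M / σ²; that is, the passive RIS achieves a strictly higher SNR than the NCR for every amplification gain. -/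
/-! The NCR gain `α² / (1 + α² β₂ M)` saturates: it increases in `α` towards `1 / (β₂ M)` without
reaching it, and `1 / (β₂ M) ≤ N²` is exactly the hypothesis `1 ≤ N² M β₂`. Both SNRs share the
factor `P β₁ β₂ M / σ²`, so the NCR SNR stays strictly below the RIS SNR. -/

theorem div_one_add_mul_lt_inv {x c : ℝ} (hx : 0 ≤ x) (hc : 0 < c) : x / (1 + x * c) < c⁻¹ := by
  rw [div_lt_iff₀ (by positivity), mul_add, mul_one, mul_comm x c, inv_mul_cancel_left₀ hc.ne']
  exact lt_add_of_pos_left x (inv_pos.mpr hc)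

theorem passive_ris_always_beats_ncr_general (P β₁ β₂ σ2 M N : ℝ)
    (hP : 0 < P) (h1 : 0 < β₁) (h2 : 0 < β₂) (hσ : 0 < σ2) (hM : 0 < M)
    (hcond : 1 ≤ N ^ 2 * M * β₂) :
    ∀ α : ℝ, 0 ≤ α →
      α ^ 2 * P * M * β₁ * β₂ / (σ2 * (1 + α ^ 2 * β₂ * M)) < P * β₁ * β₂ * N ^ 2 * M / σ2 := by
  intro α _
  have hβM : 0 < β₂ * M := mul_pos h2 hM
  have hgain : α ^ 2 / (1 + α ^ 2 * (β₂ * M)) < N ^ 2 :=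
    (div_one_add_mul_lt_inv (sq_nonneg α) hβM).trans_le
      ((inv_le_iff_one_le_mul₀ hβM).mpr (by linarith))
  calc α ^ 2 * P * M * β₁ * β₂ / (σ2 * (1 + α ^ 2 * β₂ * M))
      = P * β₁ * β₂ * M / σ2 * (α ^ 2 / (1 + α ^ 2 * (β₂ * M))) := by
        rw [div_mul_div_comm]; ring
    _ < P * β₁ * β₂ * M / σ2 * N ^ 2 := by gcongr
    _ = P * β₁ * β₂ * N ^ 2 * M / σ2 := by ring

/-- NCR vs. passive RIS without a direct link: if `N² M β₂ ≥ 1`, the passive RIS achieves a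
strictly higher SNR than the NCR for every amplification gain `α ≥ 0`. -/
theorem passive_ris_always_beats_ncr (P β₁ β₂ σ2 M N : ℝ)
    (hP : 0 < P) (h1 : 0 < β₁) (h2 : 0 < β₂) (hσ : 0 < σ2) (hM : 0 < M) (hN : 0 < N)
    (hcond : 1 ≤ N ^ 2 * M * β₂) :
    ∀ α : ℝ, 0 ≤ α →
      α ^ 2 * P * M * β₁ * β₂ / (σ2 * (1 + α ^ 2 * β₂ * M)) < P * β₁ * β₂ * N ^ 2 * M / σ2 :=
  passive_ris_always_beats_ncr_general P β₁ β₂ σ2 M N hP h1 h2 hσ hM hcond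
end

section
/- Let P, β₁, β₂, σ², M, N, α_A be positive reals with (N² − N) α_A² M β₂ < 1, and let α ≥ 0. Then α² P M β₁ β₂ / (σ² (1 + α² β₂ M)) ≥ α_A² P β₁ β₂ N² M / (σ² (1 + α_A² β₂ M N)) if and only if α ≥ α_A N / √(1 − (N² − N) α_A² M β₂). -/
/-!
Both SNRs share the factor `P M β₁ β₂ / σ²`; cross-multiplying the two denominators, the NCR
wins exactly when `α² (1 − (N² − N) α_A² M β₂) ≥ (α_A N)²`. Under the hypothesis the bracket is
positive, so taking square roots of these nonnegative quantities gives the threshold on `α`.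
-/

lemma div_sqrt_le_iff_sq_le_sq_mul {x α D : ℝ} (hx : 0 ≤ x) (hα : 0 ≤ α) (hD : 0 < D) :
    x / √D ≤ α ↔ x ^ 2 ≤ α ^ 2 * D := by
  rw [div_le_iff₀ (Real.sqrt_pos.mpr hD), ← pow_le_pow_iff_left₀ hx (by positivity) two_ne_zero,
    mul_pow, Real.sq_sqrt hD.le]

lemma active_ris_snr_le_ncr_snr_iff {P β₁ β₂ σ2 M N αA α : ℝ}
    (hP : 0 < P) (h1 : 0 < β₁) (h2 : 0 < β₂) (hσ : 0 < σ2) (hM : 0 < M) (hN : 0 < N) :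
    αA ^ 2 * P * β₁ * β₂ * N ^ 2 * M / (σ2 * (1 + αA ^ 2 * β₂ * M * N))
        ≤ α ^ 2 * P * M * β₁ * β₂ / (σ2 * (1 + α ^ 2 * β₂ * M))
      ↔ (αA * N) ^ 2 ≤ α ^ 2 * (1 - (N ^ 2 - N) * αA ^ 2 * M * β₂) := by
  have hK : 0 < P * M * β₁ * β₂ * σ2 := by positivity
  have cross_sub :
      α ^ 2 * P * M * β₁ * β₂ * (σ2 * (1 + αA ^ 2 * β₂ * M * N))
          - αA ^ 2 * P * β₁ * β₂ * N ^ 2 * M * (σ2 * (1 + α ^ 2 * β₂ * M))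
        = P * M * β₁ * β₂ * σ2
          * (α ^ 2 * (1 - (N ^ 2 - N) * αA ^ 2 * M * β₂) - (αA * N) ^ 2) := by
    ring
  rw [div_le_div_iff₀ (by positivity) (by positivity), ← sub_nonneg, cross_sub,
    mul_nonneg_iff_of_pos_left hK, sub_nonneg]

/-- NCR vs. active RIS without a direct link: under `(N² − N) α_A² M β₂ < 1`, the NCR SNR
exceeds the active-RIS SNR if and only if `α ≥ α_A N / √(1 − (N² − N) α_A² M β₂)`. -/
theorem ncr_beats_active_ris_iff (P β₁ β₂ σ2 M N αA : ℝ)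
    (hP : 0 < P) (h1 : 0 < β₁) (h2 : 0 < β₂) (hσ : 0 < σ2) (hM : 0 < M) (hN : 0 < N)
    (hαA : 0 < αA) (hcond : (N ^ 2 - N) * αA ^ 2 * M * β₂ < 1) (α : ℝ) (hα : 0 ≤ α) :
    α ^ 2 * P * M * β₁ * β₂ / (σ2 * (1 + α ^ 2 * β₂ * M))
        ≥ αA ^ 2 * P * β₁ * β₂ * N ^ 2 * M / (σ2 * (1 + αA ^ 2 * β₂ * M * N))
      ↔ α ≥ αA * N / Real.sqrt (1 - (N ^ 2 - N) * αA ^ 2 * M * β₂) := by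
  have hD : 0 < 1 - (N ^ 2 - N) * αA ^ 2 * M * β₂ := sub_pos.mpr hcond
  exact (active_ris_snr_le_ncr_snr_iff hP h1 h2 hσ hM hN).trans
    (div_sqrt_le_iff_sq_le_sq_mul (by positivity) hα hD).symm
end

section
/- Let P, β₁, β₂, σ², M, N, α_A be positive reals with (N² − N) α_A² M β₂ ≥ 1. Then for every α ≥ 0, α² P M β₁ β₂ / (σ² (1 + α² β₂ M)) < α_A² P β₁ β₂ N² M / (σ² (1 + α_A² β₂ M N)); that is, the active RIS achieves a strictly higher SNR than the NCR for every NCR amplification gain. -/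
/-!
Both SNRs are the first-hop SNR `P β₁ / σ²` times a gain factor. For the NCR the factor is
`x / (1 + x)` with `x = α² β₂ M ≥ 0`, which is always below `1`: the NCR can never beat its own
first hop. For the active RIS it is `N y / (1 + y)` with `y = α_A² β₂ M N`, and the hypothesis
says exactly `(N - 1) y ≥ 1`, i.e. `N y ≥ 1 + y`, so the factor is at least `1`.
-/

lemma div_one_add_self_lt_one {x : ℝ} (hx : 0 ≤ x) : x / (1 + x) < 1 := by
  rw [div_lt_one (by positivity)]
  linarith

lemma one_le_mul_div_one_add_self {N y : ℝ} (hy : 0 ≤ y) (h : 1 ≤ (N - 1) * y) :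
    1 ≤ N * y / (1 + y) := by
  rw [one_le_div (by positivity)]
  linarith

theorem active_ris_always_beats_ncr_general (P β₁ β₂ σ2 M N αA : ℝ)
    (hP : 0 < P) (h1 : 0 < β₁) (h2 : 0 < β₂) (hσ : 0 < σ2) (hM : 0 < M) (hN : 0 < N)
    (hcond : 1 ≤ (N ^ 2 - N) * αA ^ 2 * M * β₂) :
    ∀ α : ℝ, 0 ≤ α →
      α ^ 2 * P * M * β₁ * β₂ / (σ2 * (1 + α ^ 2 * β₂ * M))
        < αA ^ 2 * P * β₁ * β₂ * N ^ 2 * M / (σ2 * (1 + αA ^ 2 * β₂ * M * N)) := by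
  intro α _
  have hx : 0 ≤ α ^ 2 * β₂ * M := by positivity
  have hy : 0 ≤ αA ^ 2 * β₂ * M * N := by positivity
  have hNy : 1 ≤ (N - 1) * (αA ^ 2 * β₂ * M * N) := by linarith
  calc α ^ 2 * P * M * β₁ * β₂ / (σ2 * (1 + α ^ 2 * β₂ * M))
      = P * β₁ / σ2 * (α ^ 2 * β₂ * M / (1 + α ^ 2 * β₂ * M)) := by field_simp
    _ < P * β₁ / σ2 * 1 := by gcongr; exact div_one_add_self_lt_one hx
    _ ≤ P * β₁ / σ2 * (N * (αA ^ 2 * β₂ * M * N) / (1 + αA ^ 2 * β₂ * M * N)) := by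
      gcongr; exact one_le_mul_div_one_add_self hy hNy
    _ = αA ^ 2 * P * β₁ * β₂ * N ^ 2 * M / (σ2 * (1 + αA ^ 2 * β₂ * M * N)) := by field_simp

/-- NCR vs. active RIS without a direct link: if `(N² − N) α_A² M β₂ ≥ 1`, the active RIS
achieves a strictly higher SNR than the NCR for every NCR amplification gain `α ≥ 0`. -/
theorem active_ris_always_beats_ncr (P β₁ β₂ σ2 M N αA : ℝ)
    (hP : 0 < P) (h1 : 0 < β₁) (h2 : 0 < β₂) (hσ : 0 < σ2) (hM : 0 < M) (hN : 0 < N)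
    (hαA : 0 < αA) (hcond : 1 ≤ (N ^ 2 - N) * αA ^ 2 * M * β₂) :
    ∀ α : ℝ, 0 ≤ α →
      α ^ 2 * P * M * β₁ * β₂ / (σ2 * (1 + α ^ 2 * β₂ * M))
        < αA ^ 2 * P * β₁ * β₂ * N ^ 2 * M / (σ2 * (1 + αA ^ 2 * β₂ * M * N)) :=
  active_ris_always_beats_ncr_general P β₁ β₂ σ2 M N αA hP h1 h2 hσ hM hN hcond
end

section
/- Let M, N be positive integers, β₁, β₂ > 0, let h₃ ∈ ℂ^M, let a₂₁ ∈ ℂ^M have unit-modulus entries (so ‖a₂₁‖² = M), and let a₁, a₂₂ ∈ ℂ^N have unit-modulus entries. Then for every ψ ∈ ℂ^N with |ψ_n| = 1 for all n, ‖h₃ + √(β₁β₂) (∑_{n=1}^N ψ_n (a₂₂)_n (a₁)_n) a₂₁‖² ≤ ‖h₃‖² + β₁β₂ N² M + 2√(β₁β₂) N |⟨a₂₁, h₃⟩|, and there exists a unit-modulus configuration ψ achieving equality; here ⟨a₂₁, h₃⟩ = ∑_{m=1}^M conj((a₂₁)_m) (h₃)_m. -/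
open Finset ComplexConjugate

/-!
With `|a₂₁ₘ| = 1`, expanding the square gives, for the scalar gain
`z = √(β₁β₂) ∑ ψₙ a₂₂ₙ a₁ₙ`,
`∑ |h₃ₘ + z a₂₁ₘ|² = ‖h₃‖² + M |z|² + 2 Re (z̄ ⟨a₂₁, h₃⟩)`,
and `|z| ≤ √(β₁β₂) N` by the triangle inequality. Both bounds are attained by
`ψₙ = u · conj (a₂₂ₙ a₁ₙ)`, which makes all `N` terms of `z` equal to the unit `u`, with `u`
chosen to align the phase of `z` with that of `⟨a₂₁, h₃⟩`.
-/

section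
variable {𝕜 ι : Type*} [RCLike 𝕜] [Fintype ι]

theorem RCLike.sum_norm_add_mul_sq_of_norm_eq_one {a : ι → 𝕜} (ha : ∀ i, ‖a i‖ = 1)
    (h : ι → 𝕜) (z : 𝕜) :
    ∑ i, ‖h i + z * a i‖ ^ 2
      = ∑ i, ‖h i‖ ^ 2 + ‖z‖ ^ 2 * Fintype.card ι
        + 2 * RCLike.re (conj z * ∑ i, conj (a i) * h i) := by
  have hterm : ∀ i, ‖h i + z * a i‖ ^ 2
      = ‖h i‖ ^ 2 + ‖z‖ ^ 2 + 2 * RCLike.re (conj z * (conj (a i) * h i)) := by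
    intro i
    rw [← RCLike.normSq_eq_def', ← RCLike.normSq_eq_def', ← RCLike.normSq_eq_def',
      RCLike.normSq_add, RCLike.normSq_mul, RCLike.normSq_eq_def' (a i), ha i, one_pow, mul_one]
    congr 3
    simp only [map_mul]
    ring
  simp only [hterm, sum_add_distrib, sum_const, card_univ, nsmul_eq_mul, mul_sum, map_sum]
  ring

theorem norm_sum_le_card_of_norm_le_one {E : Type*} [SeminormedAddCommGroup E] {w : ι → E}
    (hw : ∀ i, ‖w i‖ ≤ 1) : ‖∑ i, w i‖ ≤ Fintype.card ι := by
  simpa using norm_sum_le_of_le univ fun i _ => hw i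

theorem RCLike.exists_norm_eq_one_re_conj_mul_eq_norm (g : 𝕜) :
    ∃ u : 𝕜, ‖u‖ = 1 ∧ RCLike.re (conj u * g) = ‖g‖ := by
  obtain ⟨c, hc, hcg⟩ := RCLike.exists_norm_eq_mul_self g
  exact ⟨conj c, by rwa [RCLike.norm_conj], by rw [RCLike.conj_conj, ← hcg, RCLike.ofReal_re]⟩

theorem RCLike.sum_norm_add_mul_sq_le {a : ι → 𝕜} (ha : ∀ i, ‖a i‖ = 1) (h : ι → 𝕜) {z : 𝕜}
    {r : ℝ} (hz : ‖z‖ ≤ r) :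
    ∑ i, ‖h i + z * a i‖ ^ 2
      ≤ ∑ i, ‖h i‖ ^ 2 + r ^ 2 * Fintype.card ι + 2 * r * ‖∑ i, conj (a i) * h i‖ := by
  set g := ∑ i, conj (a i) * h i
  have hre : RCLike.re (conj z * g) ≤ r * ‖g‖ :=
    calc RCLike.re (conj z * g) ≤ ‖conj z * g‖ := RCLike.re_le_norm _
      _ = ‖z‖ * ‖g‖ := by rw [norm_mul, RCLike.norm_conj]
      _ ≤ r * ‖g‖ := by gcongr
  rw [RCLike.sum_norm_add_mul_sq_of_norm_eq_one ha, mul_assoc 2 r]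
  gcongr

theorem RCLike.sum_norm_add_mul_sq_of_re_conj_mul_eq {a : ι → 𝕜} (ha : ∀ i, ‖a i‖ = 1)
    (h : ι → 𝕜) {z : 𝕜}
    (hz : RCLike.re (conj z * ∑ i, conj (a i) * h i) = ‖z‖ * ‖∑ i, conj (a i) * h i‖) :
    ∑ i, ‖h i + z * a i‖ ^ 2
      = ∑ i, ‖h i‖ ^ 2 + ‖z‖ ^ 2 * Fintype.card ι + 2 * ‖z‖ * ‖∑ i, conj (a i) * h i‖ := by
  rw [RCLike.sum_norm_add_mul_sq_of_norm_eq_one ha, hz, mul_assoc 2]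

end

theorem passive_ris_with_direct_link_general (M N : ℕ)
    (β₁ β₂ : ℝ) (h1 : 0 < β₁) (h2 : 0 < β₂)
    (h₃ a21 : Fin M → ℂ) (ha21 : ∀ m, ‖a21 m‖ = 1)
    (a1 a22 : Fin N → ℂ)
    (ha1 : ∀ n, ‖a1 n‖ = 1) (ha22 : ∀ n, ‖a22 n‖ = 1) :
    (∀ ψ : Fin N → ℂ, (∀ n, ‖ψ n‖ = 1) →
      ∑ m, ‖h₃ m +
          (Real.sqrt (β₁ * β₂) : ℂ) * (∑ n, ψ n * a22 n * a1 n) * a21 m‖ ^ 2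
        ≤ (∑ m, ‖h₃ m‖ ^ 2) + β₁ * β₂ * (N : ℝ) ^ 2 * (M : ℝ)
          + 2 * Real.sqrt (β₁ * β₂) * (N : ℝ) *
              ‖∑ m, (starRingEnd ℂ) (a21 m) * h₃ m‖) ∧
    (∃ ψ : Fin N → ℂ, (∀ n, ‖ψ n‖ = 1) ∧
      ∑ m, ‖h₃ m +
          (Real.sqrt (β₁ * β₂) : ℂ) * (∑ n, ψ n * a22 n * a1 n) * a21 m‖ ^ 2
        = (∑ m, ‖h₃ m‖ ^ 2) + β₁ * β₂ * (N : ℝ) ^ 2 * (M : ℝ)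
          + 2 * Real.sqrt (β₁ * β₂) * (N : ℝ) *
              ‖∑ m, (starRingEnd ℂ) (a21 m) * h₃ m‖) := by
  set c := Real.sqrt (β₁ * β₂)
  have hc0 : 0 ≤ c := Real.sqrt_nonneg _
  have hc : c ^ 2 = β₁ * β₂ := Real.sq_sqrt (by positivity)
  refine ⟨fun ψ hψ => ?_, ?_⟩
  · have hs : ‖∑ n, ψ n * a22 n * a1 n‖ ≤ N := by
      simpa using norm_sum_le_card_of_norm_le_one (w := fun n => ψ n * a22 n * a1 n)
        fun n => by simp [hψ n, ha22 n, ha1 n]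
    have hz : ‖(c : ℂ) * ∑ n, ψ n * a22 n * a1 n‖ ≤ c * N := by
      rw [norm_mul, Complex.norm_of_nonneg hc0]
      gcongr
    calc _ ≤ _ := RCLike.sum_norm_add_mul_sq_le ha21 h₃ hz
      _ = _ := by rw [Fintype.card_fin, mul_pow, hc]; ring
  · obtain ⟨u, hu, hug⟩ := RCLike.exists_norm_eq_one_re_conj_mul_eq_norm
      (∑ m, conj (a21 m) * h₃ m)
    have hcancel : ∀ n, u * conj (a22 n * a1 n) * a22 n * a1 n = u := fun n => by
      have hw : conj (a22 n * a1 n) * (a22 n * a1 n) = 1 := by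
        rw [RCLike.conj_mul, norm_mul, ha22 n, ha1 n]; simp
      linear_combination u * hw
    refine ⟨fun n => u * conj (a22 n * a1 n), fun n => by simp [hu, ha22 n, ha1 n], ?_⟩
    have hz : ‖(c : ℂ) * (N * u)‖ = c * N := by simp [hu, hc0]
    simp only [hcancel, sum_const, card_univ, Fintype.card_fin, nsmul_eq_mul]
    rw [RCLike.sum_norm_add_mul_sq_of_re_conj_mul_eq ha21 h₃, hz, Fintype.card_fin, mul_pow, hc]
    · ring
    · have hconj : conj ((c : ℂ) * (N * u)) = ((c * N : ℝ) : ℂ) * conj u := by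
        simp only [map_mul, Complex.conj_ofReal, map_natCast]; push_cast; ring
      rw [hz, ← hug, hconj, mul_assoc]
      exact Complex.re_ofReal_mul _ _

/-- Passive-RIS optimization with a direct BS–UE channel `h₃`: for every unit-modulus
configuration `ψ`, the squared norm of the overall channel
`h₃ + √(β₁β₂) (∑ ψ n (a₂₂)_n (a₁)_n) a₂₁` is at most
`‖h₃‖² + β₁β₂ N² M + 2√(β₁β₂) N |⟨a₂₁, h₃⟩|`, and some unit-modulus `ψ` achieves equality. -/
theorem passive_ris_with_direct_link (M N : ℕ) (hM : 0 < M) (hN : 0 < N)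
    (β₁ β₂ : ℝ) (h1 : 0 < β₁) (h2 : 0 < β₂)
    (h₃ a21 : Fin M → ℂ) (ha21 : ∀ m, ‖a21 m‖ = 1)
    (a1 a22 : Fin N → ℂ)
    (ha1 : ∀ n, ‖a1 n‖ = 1) (ha22 : ∀ n, ‖a22 n‖ = 1) :
    (∀ ψ : Fin N → ℂ, (∀ n, ‖ψ n‖ = 1) →
      ∑ m, ‖h₃ m +
          (Real.sqrt (β₁ * β₂) : ℂ) * (∑ n, ψ n * a22 n * a1 n) * a21 m‖ ^ 2
        ≤ (∑ m, ‖h₃ m‖ ^ 2) + β₁ * β₂ * (N : ℝ) ^ 2 * (M : ℝ)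
          + 2 * Real.sqrt (β₁ * β₂) * (N : ℝ) *
              ‖∑ m, (starRingEnd ℂ) (a21 m) * h₃ m‖) ∧
    (∃ ψ : Fin N → ℂ, (∀ n, ‖ψ n‖ = 1) ∧
      ∑ m, ‖h₃ m +
          (Real.sqrt (β₁ * β₂) : ℂ) * (∑ n, ψ n * a22 n * a1 n) * a21 m‖ ^ 2
        = (∑ m, ‖h₃ m‖ ^ 2) + β₁ * β₂ * (N : ℝ) ^ 2 * (M : ℝ)
          + 2 * Real.sqrt (β₁ * β₂) * (N : ℝ) *
              ‖∑ m, (starRingEnd ℂ) (a21 m) * h₃ m‖) :=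
  passive_ris_with_direct_link_general M N β₁ β₂ h1 h2 h₃ a21 ha21 a1 a22 ha1 ha22
end

section
/- Let N be a positive integer, let a > 0, e ≥ 0, b ≥ 0, c > 0, s > 0 and α_max ≥ 0 be reals, and define g(r) = (a (∑_{n=1}^N r_n)² − e ∑_{n=1}^N r_n² + b ∑_{n=1}^N r_n) / (s + c ∑_{n=1}^N r_n²) for r ∈ ℝ^N. Then for every r ∈ [0, α_max]^N there exists t ∈ [0, α_max] such that g(t, t, …, t) ≥ g(r); consequently, the supremum of g over the box [0, α_max]^N equals its supremum over constant vectors, i.e., equal amplitudes are optimal. -/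
open Finset

/-- The active-RIS SNR (with optimal phases, direct link present) as a function of the
per-element amplitudes `r ∈ ℝ^N`. -/
noncomputable def risAmpObj (N : ℕ) (a e b c s : ℝ) (r : Fin N → ℝ) : ℝ :=
  (a * (∑ n, r n) ^ 2 - e * ∑ n, r n ^ 2 + b * ∑ n, r n) / (s + c * ∑ n, r n ^ 2)

/-!
Replacing `r` by its mean vector keeps `∑ r n` and, by Cauchy–Schwarz, does not increase
`∑ r n ^ 2`; since `e, c ≥ 0` this raises the numerator of `g` and lowers its denominator. That
improves `g` when the numerator is positive; otherwise `g r ≤ 0 = g 0`. So every value on the box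
is dominated by a value on the diagonal, and the two suprema agree (even when unbounded, as both
are then the junk value `0`).
-/

open scoped BigOperators

section MeanVector

variable {ι : Type*} [Fintype ι]

lemma sum_const_expect {M : Type*} [AddCommMonoid M] [Module ℚ≥0 M] (r : ι → M) :
    ∑ _i : ι, 𝔼 j, r j = ∑ i, r i := by
  rw [sum_const, card_smul_expect]

lemma sum_sq_const_expect_le (r : ι → ℝ) : ∑ _i : ι, (𝔼 j, r j) ^ 2 ≤ ∑ i, r i ^ 2 := by
  cases isEmpty_or_nonempty ι
  · simp
  rw [sum_const, card_univ, nsmul_eq_mul, ← Fintype.card_mul_expect]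
  gcongr
  simpa using expect_mul_sq_le_sq_mul_sq univ r 1

lemma expect_mem_Icc [Nonempty ι] {r : ι → ℝ} {x y : ℝ} (h : ∀ i, r i ∈ Set.Icc x y) :
    𝔼 i, r i ∈ Set.Icc x y :=
  ⟨le_expect univ_nonempty fun i _ ↦ (h i).1, expect_le univ_nonempty fun i _ ↦ (h i).2⟩

end MeanVector

lemma div_le_max_zero_div {α : Type*} [Field α] [LinearOrder α] [IsStrictOrderedRing α]
    {x x' y y' : α} (hx : x ≤ x') (hy' : 0 < y') (hy : y' ≤ y) :
    x / y ≤ max 0 (x' / y') := by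
  rcases le_or_gt x 0 with hx0 | hx0
  · exact (div_nonpos_of_nonpos_of_nonneg hx0 (hy'.trans_le hy).le).trans (le_max_left _ _)
  · exact (div_le_div₀ (hx0.le.trans hx) hx hy' hy).trans (le_max_right _ _)

lemma risAmpObj_le_max_of_sum_eq_of_sum_sq_le {N : ℕ} {a e b c s : ℝ}
    (he : 0 ≤ e) (hc : 0 ≤ c) (hs : 0 < s) {r r' : Fin N → ℝ}
    (hsum : ∑ n, r' n = ∑ n, r n) (hsq : ∑ n, r' n ^ 2 ≤ ∑ n, r n ^ 2) :
    risAmpObj N a e b c s r ≤ max 0 (risAmpObj N a e b c s r') := by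
  unfold risAmpObj
  rw [hsum]
  apply div_le_max_zero_div
  · gcongr
  · positivity
  · gcongr

lemma risAmpObj_zero (N : ℕ) (a e b c s : ℝ) : risAmpObj N a e b c s (fun _ ↦ 0) = 0 := by
  simp [risAmpObj]

theorem equal_amplitudes_optimal_general (N : ℕ) (hN : 0 < N) (a e b c s αmax : ℝ)
    (he : 0 ≤ e) (hc : 0 < c) (hs : 0 < s) (hαmax : 0 ≤ αmax) :
    (∀ r : Fin N → ℝ, (∀ n, r n ∈ Set.Icc (0 : ℝ) αmax) →
      ∃ t ∈ Set.Icc (0 : ℝ) αmax,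
        risAmpObj N a e b c s (fun _ => t) ≥ risAmpObj N a e b c s r) ∧
    sSup (risAmpObj N a e b c s '' {r | ∀ n, r n ∈ Set.Icc (0 : ℝ) αmax})
      = sSup ((fun t : ℝ => risAmpObj N a e b c s (fun _ => t)) '' Set.Icc (0 : ℝ) αmax) := by
  have : Nonempty (Fin N) := Fin.pos_iff_nonempty.mp hN
  have equalize : ∀ r : Fin N → ℝ, (∀ n, r n ∈ Set.Icc (0 : ℝ) αmax) →
      ∃ t ∈ Set.Icc (0 : ℝ) αmax,
        risAmpObj N a e b c s (fun _ => t) ≥ risAmpObj N a e b c s r := by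
    intro r hr
    have hle := risAmpObj_le_max_of_sum_eq_of_sum_sq_le (a := a) (b := b) he hc.le hs
      (sum_const_expect r) (sum_sq_const_expect_le r)
    rw [← risAmpObj_zero N a e b c s, le_max_iff] at hle
    rcases hle with hle | hle
    · exact ⟨0, ⟨le_rfl, hαmax⟩, hle⟩
    · exact ⟨_, expect_mem_Icc hr, hle⟩
  refine ⟨equalize, csSup_eq_csSup_of_forall_exists_le ?_ ?_⟩
  · rintro _ ⟨r, hr, rfl⟩
    obtain ⟨t, ht, hge⟩ := equalize r hr
    exact ⟨_, ⟨t, ht, rfl⟩, hge⟩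
  · rintro _ ⟨t, ht, rfl⟩
    exact ⟨_, ⟨fun _ ↦ t, fun _ ↦ ht, rfl⟩, le_rfl⟩

/-- Equal amplitudes are optimal: for every `r ∈ [0, α_max]^N` there is `t ∈ [0, α_max]`
with `g(t, …, t) ≥ g(r)`; consequently the supremum of `g` over the box equals its
supremum over constant vectors. -/
theorem equal_amplitudes_optimal (N : ℕ) (hN : 0 < N) (a e b c s αmax : ℝ)
    (ha : 0 < a) (he : 0 ≤ e) (hb : 0 ≤ b) (hc : 0 < c) (hs : 0 < s) (hαmax : 0 ≤ αmax) :
    (∀ r : Fin N → ℝ, (∀ n, r n ∈ Set.Icc (0 : ℝ) αmax) →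
      ∃ t ∈ Set.Icc (0 : ℝ) αmax,
        risAmpObj N a e b c s (fun _ => t) ≥ risAmpObj N a e b c s r) ∧
    sSup (risAmpObj N a e b c s '' {r | ∀ n, r n ∈ Set.Icc (0 : ℝ) αmax})
      = sSup ((fun t : ℝ => risAmpObj N a e b c s (fun _ => t)) '' Set.Icc (0 : ℝ) αmax) :=
  equal_amplitudes_optimal_general N hN a e b c s αmax he hc hs hαmax
end

section
/- Let 𝒜 ∈ ℝ, ℬ > 0, 𝒞 > 0 and s > 0 be reals, define f(α) = (𝒜α² + ℬα)/(s + 𝒞α²) for α ≥ 0, and set α* = (𝒜 s + √(𝒜² s² + ℬ² 𝒞 s)) / (ℬ 𝒞). Then α* > 0, f is monotonically increasing on [0, α*] and monotonically decreasing on [α*, ∞); consequently, for every α_max ≥ 0 and every α ∈ [0, α_max], f(α) ≤ f(min(α*, α_max)), i.e., the maximum of f over [0, α_max] is attained at min(α*, α_max). -/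
/-!
Cross-multiplying, `f y - f x` has the sign of `(y - x) · (𝒜s(x + y) + ℬs - ℬ𝒞xy)`.
If `m < p` are the roots of `ℬ𝒞α² - 2𝒜sα - ℬs` (the numerator of `-f'`), Vieta's formulas turn
the second factor into `-(ℬ𝒞/2)((x - p)(y - m) + (x - m)(y - p))`, which is `≥ 0` for
`x, y ∈ [m, p]` and `≤ 0` for `x, y ≥ p`. Here `p = α*`, and `m < 0 < p` because the square root
of the discriminant exceeds `|𝒜s|`.
-/

open Set

theorem le_apply_min_of_monotoneOn_of_antitoneOn {α β : Type*} [LinearOrder α] [Preorder β]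
    {f : α → β} {a p b x : α} (hmono : MonotoneOn f (Icc a p)) (hanti : AntitoneOn f (Ici p))
    (hap : a ≤ p) (hx : x ∈ Icc a b) : f x ≤ f (min p b) := by
  rcases le_total x (min p b) with hle | hlt
  · exact hmono ⟨hx.1, hle.trans (min_le_left _ _)⟩
      ⟨le_min hap (hx.1.trans hx.2), min_le_left _ _⟩ hle
  · rcases le_total p b with hpb | hbp
    · rw [min_eq_left hpb] at hlt ⊢
      exact hanti (mem_Ici.2 le_rfl) hlt hlt
    · rw [min_eq_right hbp] at hlt ⊢
      rw [le_antisymm hx.2 hlt]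

noncomputable def ampGain (A B C s α : ℝ) : ℝ := (A * α ^ 2 + B * α) / (s + C * α ^ 2)

namespace ampGain

variable {A B C s : ℝ}

theorem sub_eq {x y : ℝ} (hx : s + C * x ^ 2 ≠ 0) (hy : s + C * y ^ 2 ≠ 0) :
    ampGain A B C s y - ampGain A B C s x =
      (y - x) * (A * s * (x + y) + B * s - B * C * (x * y)) /
        ((s + C * x ^ 2) * (s + C * y ^ 2)) := by
  rw [ampGain, ampGain, div_sub_div _ _ hy hx]
  congr 1 <;> ring

theorem cross_eq_of_vieta {p m : ℝ} (hsum : B * C * (p + m) = 2 * (A * s))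
    (hprod : B * C * (p * m) = -(B * s)) (x y : ℝ) :
    A * s * (x + y) + B * s - B * C * (x * y) =
      -(B * C / 2) * ((x - p) * (y - m) + (x - m) * (y - p)) := by
  linear_combination (-(x + y) / 2) * hsum + hprod

section Vieta

variable {p m : ℝ} (hB : 0 < B) (hC : 0 < C) (hs : 0 < s)
  (hsum : B * C * (p + m) = 2 * (A * s)) (hprod : B * C * (p * m) = -(B * s))
include hB hC hs hsum hprod

theorem le_of_mul_cross_nonpos {x y : ℝ}
    (hcross : (y - x) * ((x - p) * (y - m) + (x - m) * (y - p)) ≤ 0) :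
    ampGain A B C s x ≤ ampGain A B C s y := by
  have hx : 0 < s + C * x ^ 2 := by positivity
  have hy : 0 < s + C * y ^ 2 := by positivity
  rw [← sub_nonneg, sub_eq hx.ne' hy.ne', cross_eq_of_vieta hsum hprod]
  have : 0 ≤ (y - x) * (-(B * C / 2) * ((x - p) * (y - m) + (x - m) * (y - p))) := by
    nlinarith [mul_pos hB hC]
  positivity

theorem monotoneOn_Icc : MonotoneOn (ampGain A B C s) (Icc m p) := by
  intro x hx y hy hxy
  refine le_of_mul_cross_nonpos hB hC hs hsum hprod ?_
  refine mul_nonpos_of_nonneg_of_nonpos (sub_nonneg.2 hxy) ?_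
  exact add_nonpos (mul_nonpos_of_nonpos_of_nonneg (sub_nonpos.2 hx.2) (sub_nonneg.2 hy.1))
    (mul_nonpos_of_nonneg_of_nonpos (sub_nonneg.2 hx.1) (sub_nonpos.2 hy.2))

theorem antitoneOn_Ici (hmp : m ≤ p) : AntitoneOn (ampGain A B C s) (Ici p) := by
  intro x hx y hy hxy
  refine le_of_mul_cross_nonpos hB hC hs hsum hprod ?_
  refine mul_nonpos_of_nonpos_of_nonneg (sub_nonpos.2 hxy) ?_
  exact add_nonneg (mul_nonneg (sub_nonneg.2 hy) (sub_nonneg.2 (hmp.trans hx)))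
    (mul_nonneg (sub_nonneg.2 (hmp.trans hy)) (sub_nonneg.2 hx))

end Vieta

end ampGain

/-- Optimal amplification with a positive coherent cross term: for
`f(α) = (𝒜α² + ℬα)/(s + 𝒞α²)` with `ℬ, 𝒞, s > 0` and
`α* = (𝒜s + √(𝒜²s² + ℬ²𝒞s))/(ℬ𝒞)`, one has `α* > 0`, `f` is monotonically increasing
on `[0, α*]` and decreasing on `[α*, ∞)`, so the maximum of `f` over `[0, α_max]` is
attained at `min(α*, α_max)`. -/
theorem amp_opt_unimodal (A B C s : ℝ) (hB : 0 < B) (hC : 0 < C) (hs : 0 < s)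
    (αstar : ℝ) (hstar : αstar = (A * s + Real.sqrt (A ^ 2 * s ^ 2 + B ^ 2 * C * s)) / (B * C)) :
    0 < αstar ∧
    MonotoneOn (fun α : ℝ => (A * α ^ 2 + B * α) / (s + C * α ^ 2)) (Set.Icc 0 αstar) ∧
    AntitoneOn (fun α : ℝ => (A * α ^ 2 + B * α) / (s + C * α ^ 2)) (Set.Ici αstar) ∧
    ∀ αmax : ℝ, 0 ≤ αmax → ∀ α ∈ Set.Icc (0 : ℝ) αmax,
      (A * α ^ 2 + B * α) / (s + C * α ^ 2)
        ≤ (A * (min αstar αmax) ^ 2 + B * (min αstar αmax)) / (s + C * (min αstar αmax) ^ 2) := by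
  set r := Real.sqrt (A ^ 2 * s ^ 2 + B ^ 2 * C * s)
  set m := (A * s - r) / (B * C) with hm_def
  have hBC : 0 < B * C := mul_pos hB hC
  have hr2 : r ^ 2 = A ^ 2 * s ^ 2 + B ^ 2 * C * s := Real.sq_sqrt (by positivity)
  obtain ⟨hr_lo, hr_hi⟩ : -r < A * s ∧ A * s < r :=
    abs_lt_of_sq_lt_sq' (by rw [hr2]; nlinarith [mul_pos hBC (mul_pos hB hs)]) (Real.sqrt_nonneg _)
  have hp : 0 < αstar := hstar ▸ div_pos (by linarith) hBC
  have hm : m < 0 := div_neg_of_neg_of_pos (by linarith) hBC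
  have hsum : B * C * (αstar + m) = 2 * (A * s) := by
    rw [hstar, hm_def]; field_simp; ring
  have hprod : B * C * (αstar * m) = -(B * s) := by
    rw [hstar, hm_def]; field_simp; linear_combination -hr2
  have hmono : MonotoneOn (ampGain A B C s) (Icc 0 αstar) :=
    (ampGain.monotoneOn_Icc hB hC hs hsum hprod).mono (Icc_subset_Icc_left hm.le)
  have hanti := ampGain.antitoneOn_Ici hB hC hs hsum hprod (hm.trans hp).le
  exact ⟨hp, hmono, hanti, fun _ _ _ hα =>
    le_apply_min_of_monotoneOn_of_antitoneOn hmono hanti hp.le hα⟩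
end
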